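/- (Convergence of value iteration for a stopping zero-sum stochastic game.) Let the game have p game elements, stage payoff matrices a^k, and transition probabilities q^{kl}_{ij} ≥ 0 with Σ_{l=1}^p q^{kl}_{ij} ≤ β for all k, i, j, where 0 ≤ β < 1, and let v ∈ ℝ^p be the unique vector satisfying v_k = val(B_k(v)) for all k. Define the recursion v^0 = (0,…,0) and v^{r+1}_k = val(B_k(v^r)), where B_k(u) has entries a^k_{ij} + Σ_{l=1}^p q^{kl}_{ij} u_l. Then v^r converges to v as r → ∞, i.e., max_k |v^r_k − v_k| → 0. -/

import Mathlib

open scoped BigOperators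

/-- Expected payoff to player 1 in the matrix game `B` when player 1 uses the
mixed strategy `y` and player 2 uses the mixed strategy `z`. -/
noncomputable def expectedPayoff {m n : ℕ} (B : Matrix (Fin m) (Fin n) ℝ)
    (y : Fin m → ℝ) (z : Fin n → ℝ) : ℝ :=
  ∑ i, ∑ j, y i * B i j * z j

/-- The value (in mixed strategies) of the zero-sum matrix game `B`:
`val(B) = sup_{y ∈ Δ_m} inf_{z ∈ Δ_n} ∑_{i,j} y_i B_{ij} z_j`. -/
noncomputable def matrixGameValue {m n : ℕ} (B : Matrix (Fin m) (Fin n) ℝ) : ℝ :=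
  ⨆ y : stdSimplex ℝ (Fin m), ⨅ z : stdSimplex ℝ (Fin n), expectedPayoff B y z

/-- The auxiliary matrix `B_k(v)` of a stochastic game, with entries
`b^k_{ij} = a^k_{ij} + ∑_l q^{kl}_{ij} v_l`. -/
noncomputable def gameElementMatrix {p : ℕ} {m n : Fin p → ℕ}
    (a : ∀ k, Matrix (Fin (m k)) (Fin (n k)) ℝ)
    (q : ∀ k, Fin (m k) → Fin (n k) → Fin p → ℝ)
    (v : Fin p → ℝ) (k : Fin p) : Matrix (Fin (m k)) (Fin (n k)) ℝ :=
  fun i j => a k i j + ∑ l, q k i j l * v l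

/-! The Shapley operator `u ↦ (val B_k(u))_k` is a `β`-contraction of `ℝ^p` in the sup metric:
`val` is monotone and commutes with adding a constant to every entry, and perturbing `u` by at
most `d` in each coordinate perturbs every entry of `B_k(u)` by at most `β d`. The iterates of a
contraction converge to its unique fixed point from any starting vector, by Banach's theorem. -/

open Filter Topology Function

section MatrixGame

variable {m n : ℕ}

lemma abs_expectedPayoff_le (B : Matrix (Fin m) (Fin n) ℝ)
    (y : stdSimplex ℝ (Fin m)) (z : stdSimplex ℝ (Fin n)) :
    |expectedPayoff B y z| ≤ ∑ i, ∑ j, |B i j| := by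
  unfold expectedPayoff
  refine (Finset.abs_sum_le_sum_abs _ _).trans (Finset.sum_le_sum fun i _ =>
    (Finset.abs_sum_le_sum_abs _ _).trans (Finset.sum_le_sum fun j _ => ?_))
  rw [abs_mul, abs_mul, abs_of_nonneg (stdSimplex.zero_le y i),
    abs_of_nonneg (stdSimplex.zero_le z j)]
  calc y i * |B i j| * z j ≤ 1 * |B i j| * 1 := by
        gcongr
        exacts [stdSimplex.zero_le z j, stdSimplex.le_one y i, stdSimplex.le_one z j]
    _ = |B i j| := by ring

lemma bddBelow_range_expectedPayoff (B : Matrix (Fin m) (Fin n) ℝ) (y : stdSimplex ℝ (Fin m)) :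
    BddBelow (Set.range fun z : stdSimplex ℝ (Fin n) => expectedPayoff B y z) :=
  ⟨-∑ i, ∑ j, |B i j|,
    Set.forall_mem_range.2 fun z => neg_le_of_abs_le (abs_expectedPayoff_le B y z)⟩

lemma bddAbove_range_iInf_expectedPayoff [NeZero n] (B : Matrix (Fin m) (Fin n) ℝ) :
    BddAbove (Set.range fun y : stdSimplex ℝ (Fin m) =>
      ⨅ z : stdSimplex ℝ (Fin n), expectedPayoff B y z) := by
  obtain ⟨z₀⟩ : Nonempty (stdSimplex ℝ (Fin n)) := inferInstance
  refine ⟨∑ i, ∑ j, |B i j|, Set.forall_mem_range.2 fun y => ?_⟩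
  exact ciInf_le_of_le (bddBelow_range_expectedPayoff B y) z₀
    (le_of_abs_le (abs_expectedPayoff_le B y z₀))

lemma expectedPayoff_add_const (B : Matrix (Fin m) (Fin n) ℝ) (c : ℝ)
    (y : stdSimplex ℝ (Fin m)) (z : stdSimplex ℝ (Fin n)) :
    expectedPayoff (B + Matrix.of fun _ _ => c) y z = expectedPayoff B y z + c := by
  simp only [expectedPayoff, Matrix.add_apply, Matrix.of_apply, mul_add, add_mul,
    Finset.sum_add_distrib, ← Finset.sum_mul, ← Finset.mul_sum, stdSimplex.sum_eq_one, mul_one,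
    one_mul]

lemma expectedPayoff_mono {B C : Matrix (Fin m) (Fin n) ℝ} (h : ∀ i j, B i j ≤ C i j)
    (y : stdSimplex ℝ (Fin m)) (z : stdSimplex ℝ (Fin n)) :
    expectedPayoff B y z ≤ expectedPayoff C y z := by
  unfold expectedPayoff
  gcongr with i _ j _
  exacts [stdSimplex.zero_le z j, stdSimplex.zero_le y i, h i j]

lemma matrixGameValue_mono [NeZero n] {B C : Matrix (Fin m) (Fin n) ℝ}
    (h : ∀ i j, B i j ≤ C i j) : matrixGameValue B ≤ matrixGameValue C :=
  ciSup_mono (bddAbove_range_iInf_expectedPayoff C) fun y =>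
    ciInf_mono (bddBelow_range_expectedPayoff B y) fun z => expectedPayoff_mono h y z

lemma matrixGameValue_add_const [NeZero m] [NeZero n] (B : Matrix (Fin m) (Fin n) ℝ) (c : ℝ) :
    matrixGameValue (B + Matrix.of fun _ _ => c) = matrixGameValue B + c := by
  simp only [matrixGameValue, expectedPayoff_add_const,
    ← ciInf_add (bddBelow_range_expectedPayoff B _),
    ciSup_add (bddAbove_range_iInf_expectedPayoff B)]

lemma matrixGameValue_le_add [NeZero m] [NeZero n] {B C : Matrix (Fin m) (Fin n) ℝ} {c : ℝ}
    (h : ∀ i j, B i j ≤ C i j + c) : matrixGameValue B ≤ matrixGameValue C + c :=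
  (matrixGameValue_mono h).trans_eq (matrixGameValue_add_const C c)

lemma abs_matrixGameValue_sub_le [NeZero m] [NeZero n] {B C : Matrix (Fin m) (Fin n) ℝ} {c : ℝ}
    (h : ∀ i j, |B i j - C i j| ≤ c) : |matrixGameValue B - matrixGameValue C| ≤ c := by
  rw [abs_sub_le_iff, sub_le_iff_le_add', sub_le_iff_le_add']
  refine ⟨matrixGameValue_le_add fun i j => ?_, matrixGameValue_le_add fun i j => ?_⟩
  · linarith [(abs_sub_le_iff.1 (h i j)).1]
  · linarith [(abs_sub_le_iff.1 (h i j)).2]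

end MatrixGame

section StochasticGame

variable {p : ℕ} {m n : Fin p → ℕ} (a : ∀ k, Matrix (Fin (m k)) (Fin (n k)) ℝ)
  (q : ∀ k, Fin (m k) → Fin (n k) → Fin p → ℝ)

noncomputable def shapleyOperator (u : Fin p → ℝ) : Fin p → ℝ :=
  fun k => matrixGameValue (gameElementMatrix a q u k)

variable {a q}

lemma abs_gameElementMatrix_sub_le {β : ℝ} (hq : ∀ k i j l, 0 ≤ q k i j l)
    (hqβ : ∀ k i j, ∑ l, q k i j l ≤ β) (u v : Fin p → ℝ) (k : Fin p) (i : Fin (m k))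
    (j : Fin (n k)) :
    |gameElementMatrix a q u k i j - gameElementMatrix a q v k i j| ≤ β * dist u v := by
  simp only [gameElementMatrix, add_sub_add_left_eq_sub, ← Finset.sum_sub_distrib, ← mul_sub]
  calc |∑ l, q k i j l * (u l - v l)| ≤ ∑ l, q k i j l * dist u v := by
        refine (Finset.abs_sum_le_sum_abs _ _).trans (Finset.sum_le_sum fun l _ => ?_)
        rw [abs_mul, abs_of_nonneg (hq k i j l), ← Real.dist_eq]
        exact mul_le_mul_of_nonneg_left (dist_le_pi_dist u v l) (hq k i j l)
    _ = (∑ l, q k i j l) * dist u v := Finset.sum_mul .. |>.symm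
    _ ≤ β * dist u v := mul_le_mul_of_nonneg_right (hqβ k i j) dist_nonneg

lemma lipschitzWith_shapleyOperator {β : ℝ} (hβ : 0 ≤ β) (hm : ∀ k, 0 < m k)
    (hn : ∀ k, 0 < n k) (hq : ∀ k i j l, 0 ≤ q k i j l)
    (hqβ : ∀ k i j, ∑ l, q k i j l ≤ β) :
    LipschitzWith ⟨β, hβ⟩ (shapleyOperator a q) := by
  refine LipschitzWith.of_dist_le_mul fun u v => (dist_pi_le_iff (by positivity)).2 fun k => ?_
  have : NeZero (m k) := NeZero.of_pos (hm k)
  have : NeZero (n k) := NeZero.of_pos (hn k)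
  exact abs_matrixGameValue_sub_le (abs_gameElementMatrix_sub_le hq hqβ u v k)

end StochasticGame

lemma tendsto_iSup_abs_sub_of_tendsto {α ι : Type*} [Fintype ι] {l : Filter α}
    {u : α → ι → ℝ} {v : ι → ℝ} (h : Tendsto u l (𝓝 v)) :
    Tendsto (fun r => ⨆ k, |u r k - v k|) l (𝓝 0) :=
  squeeze_zero (fun _ => Real.iSup_nonneg fun _ => abs_nonneg _)
    (fun r => Real.iSup_le (fun k => dist_le_pi_dist (u r) v k) dist_nonneg)
    (tendsto_iff_dist_tendsto_zero.1 h)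

theorem stochastic_game_value_iteration_tendsto_general
    (p : ℕ) (m n : Fin p → ℕ)
    (hm : ∀ k, 0 < m k) (hn : ∀ k, 0 < n k)
    (a : ∀ k, Matrix (Fin (m k)) (Fin (n k)) ℝ)
    (q : ∀ k, Fin (m k) → Fin (n k) → Fin p → ℝ)
    (hq : ∀ k i j l, 0 ≤ q k i j l)
    (β : ℝ) (hβ0 : 0 ≤ β) (hβ1 : β < 1)
    (hqβ : ∀ k i j, ∑ l, q k i j l ≤ β)
    (v : Fin p → ℝ)
    (hv : ∀ k, v k = matrixGameValue (gameElementMatrix a q v k))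
    (w : ℕ → Fin p → ℝ)
    (hwsucc : ∀ r k, w (r + 1) k = matrixGameValue (gameElementMatrix a q (w r) k)) :
    Filter.Tendsto (fun r => ⨆ k, |w r k - v k|) Filter.atTop (nhds 0) := by
  have hT : ContractingWith ⟨β, hβ0⟩ (shapleyOperator a q) :=
    ⟨hβ1, lipschitzWith_shapleyOperator hβ0 hm hn hq hqβ⟩
  have hv_fixed : IsFixedPt (shapleyOperator a q) v := funext fun k => (hv k).symm
  have hw_iterate : ∀ r, w r = (shapleyOperator a q)^[r] (w 0) := by
    intro r
    induction r with
    | zero => rfl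
    | succ r ih => rw [iterate_succ_apply', ← ih]; exact funext (hwsucc r)
  refine tendsto_iSup_abs_sub_of_tendsto ?_
  rw [funext hw_iterate, hT.fixedPoint_unique hv_fixed]
  exact hT.tendsto_iterate_fixedPoint (w 0)

/-- **Convergence of value iteration for a stopping zero-sum stochastic
game:** if `v` is the unique fixed point `v_k = val(B_k(v))` and the iterates
are `w 0 = 0`, `w (r+1) k = val(B_k(w r))`, then
`max_k |w r k − v k| → 0` as `r → ∞`. -/
theorem stochastic_game_value_iteration_tendsto
    (p : ℕ) (hp : 0 < p) (m n : Fin p → ℕ)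
    (hm : ∀ k, 0 < m k) (hn : ∀ k, 0 < n k)
    (a : ∀ k, Matrix (Fin (m k)) (Fin (n k)) ℝ)
    (q : ∀ k, Fin (m k) → Fin (n k) → Fin p → ℝ)
    (hq : ∀ k i j l, 0 ≤ q k i j l)
    (β : ℝ) (hβ0 : 0 ≤ β) (hβ1 : β < 1)
    (hqβ : ∀ k i j, ∑ l, q k i j l ≤ β)
    (v : Fin p → ℝ)
    (hv : ∀ k, v k = matrixGameValue (gameElementMatrix a q v k))
    (w : ℕ → Fin p → ℝ)
    (hw0 : w 0 = fun _ => 0)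
    (hwsucc : ∀ r k, w (r + 1) k = matrixGameValue (gameElementMatrix a q (w r) k)) :
    Filter.Tendsto (fun r => ⨆ k, |w r k - v k|) Filter.atTop (nhds 0) :=
  stochastic_game_value_iteration_tendsto_general p m n hm hn a q hq β hβ0 hβ1 hqβ v hv w hwsucc
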